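/- arXiv:1303.6140 — 2 statements merged into one kernel-verified Lean document; each statement's English description precedes it below -/
import Mathlib

section
/- Let q > 3, let φ, φ̃ ∈ Φ_q, set h = φ̃ − φ, and fix s > 0. Then the function λ ↦ a_{φ+λh}^{-1}(s) is C¹ on [0,1], and for all λ ∈ [0,1], ∂/∂λ [a_{φ+λh}^{-1}(s)] = [∫_{ℝ³} K(a_{φ+λh}^{-1}(s) − φ(x) − λ h(x)) h(x) dx] / [∫_{ℝ³} K(a_{φ+λh}^{-1}(s) − φ(x) − λ h(x)) dx], where K(η) = (((1+η)₊² − 1)₊)^{1/2} (1+η). -/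
noncomputable section

open MeasureTheory Real Set Filter Topology
open scoped ENNReal NNReal

/-- Physical space ℝ³. -/
abbrev Sp : Type := EuclideanSpace ℝ (Fin 3)

/-- Phase space ℝ³ × ℝ³. -/
abbrev Ph : Type := Sp × Sp

/-- The relativistic velocity weight √(1+|v|²). -/
def vW (v : Sp) : ℝ := Real.sqrt (1 + ‖v‖ ^ 2)

/-- The L¹ norm on phase space. -/
def L1n (f : Ph → ℝ) : ℝ := ∫ z : Ph, |f z|

/-- The L^p norm on phase space. -/
def Lpn (p : ℝ) (f : Ph → ℝ) : ℝ := (eLpNorm f (ENNReal.ofReal p) volume).toReal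

/-- The weighted norm ‖√(1+|v|²) f‖_{L¹}. -/
def kinN (f : Ph → ℝ) : ℝ := ∫ z : Ph, vW z.2 * |f z|

/-- Membership in the energy space E_p. -/
structure IsEp (p : ℝ) (f : Ph → ℝ) : Prop where
  nonneg : ∀ z, 0 ≤ f z
  meas : Measurable f
  l1 : Integrable f volume
  lp : MemLp f (ENNReal.ofReal p) volume
  kin : Integrable (fun z : Ph => vW z.2 * f z) volume

/-- The norm of the energy space E_p. -/
def EpNorm (p : ℝ) (f : Ph → ℝ) : ℝ := L1n f + Lpn p f + kinN f

/-- The spatial density ρ_f. -/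
def dens (f : Ph → ℝ) (x : Sp) : ℝ := ∫ v : Sp, f (x, v)

/-- The gravitational potential φ_f = -(1/4π) ∫ ρ_f(y)/|x-y| dy. -/
def pot (f : Ph → ℝ) (x : Sp) : ℝ := -(1 / (4 * π)) * ∫ y : Sp, dens f y / ‖x - y‖

/-- The L² norm of the gradient ‖∇φ‖_{L²}. -/
def gradL2 (φ : Sp → ℝ) : ℝ := (eLpNorm (gradient φ) 2 volume).toReal

/-- The L² norm of the difference of two gradients ‖∇φ - ∇ψ‖_{L²}. -/
def gradL2diff (φ ψ : Sp → ℝ) : ℝ :=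
  (eLpNorm (fun x => gradient φ x - gradient ψ x) 2 volume).toReal

/-- The Hamiltonian H(f). -/
def Ham (f : Ph → ℝ) : ℝ :=
  (∫ z : Ph, (vW z.2 - 1) * f z) - (1 / 2) * ∫ x : Sp, ‖gradient (pot f) x‖ ^ 2

/-- The distribution function μ_f(s) = meas{f > s}. -/
def distFun (f : Ph → ℝ) (s : ℝ) : ℝ≥0∞ := volume {z : Ph | s < f z}

/-- The Schwarz rearrangement f*(t) = inf{s ≥ 0 : μ_f(s) ≤ t}. -/
def schwarz (f : Ph → ℝ) (t : ℝ) : ℝ :=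
  sInf {s : ℝ | 0 ≤ s ∧ distFun f s ≤ ENNReal.ofReal t}

/-- m(φ) = inf_x (1+|x|)|φ(x)|. -/
def mPhi (φ : Sp → ℝ) : ℝ := ⨅ x : Sp, (1 + ‖x‖) * |φ x|

/-- Membership in the potential space Φ_q. -/
structure IsPhiq (q : ℝ) (φ : Sp → ℝ) : Prop where
  nonpos : ∀ x, φ x ≤ 0
  lq : MemLp φ (ENNReal.ofReal q) volume
  grad : MemLp (gradient φ) 2 volume
  zeroAtInfty : Tendsto φ (cocompact Sp) (𝓝 0)
  m_pos : 0 < mPhi φ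

/-- The L^q norm on ℝ³. -/
def Lqn (q : ℝ) (φ : Sp → ℝ) : ℝ := (eLpNorm φ (ENNReal.ofReal q) volume).toReal

/-- The microscopic energy e(x,v) = √(1+|v|²) - 1 + φ(x). -/
def microE (φ : Sp → ℝ) (z : Ph) : ℝ := vW z.2 - 1 + φ z.1

/-- The Jacobian a_φ(e), as an extended nonnegative real. -/
def aJacE (φ : Sp → ℝ) (e : ℝ) : ℝ≥0∞ := volume {z : Ph | microE φ z < e}

/-- The Jacobian a_φ(e) (real-valued). -/
def aJac (φ : Sp → ℝ) (e : ℝ) : ℝ := (aJacE φ e).toReal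

/-- The inverse a_φ^{-1}(s) of the Jacobian. -/
def aJacInv (φ : Sp → ℝ) (s : ℝ) : ℝ := sSup {e : ℝ | e < 0 ∧ aJac φ e < s}

/-- The essential infimum of φ, valued in EReal. -/
def essInfE (φ : Sp → ℝ) : EReal := essInf (fun x => (φ x : EReal)) volume

/-- The rearrangement f^{*φ} of f with respect to the microscopic energy of φ. -/
def rearr (f : Ph → ℝ) (φ : Sp → ℝ) (z : Ph) : ℝ :=
  if microE φ z < 0 then schwarz f (aJac φ (microE φ z)) else 0

/-- The reduced functional J(φ). -/
def Jfun (Q : Ph → ℝ) (φ : Sp → ℝ) : ℝ :=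
  (∫ z : Ph, microE φ z * rearr Q φ z) + (1 / 2) * ∫ x : Sp, ‖gradient φ x‖ ^ 2

/-- The kernel K(η) = (((1+η)₊² - 1)₊)^{1/2} (1+η). -/
def Kfun (η : ℝ) : ℝ := Real.sqrt (max ((max (1 + η) 0) ^ 2 - 1) 0) * (1 + η)

/-- Radial symmetry of a function on ℝ³. -/
def IsRadial (φ : Sp → ℝ) : Prop := ∀ x y : Sp, ‖x‖ = ‖y‖ → φ x = φ y

/-- The standing assumptions on the steady state Q. -/
structure IsSteadyState (Q : Ph → ℝ) (F : ℝ → ℝ) (eQ : ℝ) : Prop where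
  cont : Continuous Q
  nonneg : ∀ z, 0 ≤ Q z
  nonzero : Q ≠ 0
  cpt : HasCompactSupport Q
  radial : ∀ x v x' v' : Sp, ‖x‖ = ‖x'‖ → ‖v‖ = ‖v'‖ → Q (x, v) = Q (x', v')
  Fcont : Continuous F
  Fnonneg : ∀ e, 0 ≤ F e
  eQ_neg : eQ < 0
  Fzero : ∀ e, eQ ≤ e → F e = 0
  Fsmooth : ContDiffOn ℝ 1 F (Iio eQ)
  Fanti : StrictAntiOn F (Iio eQ)
  eqF : ∀ z : Ph, Q z = F (microE (pot Q) z)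

/-- The microscopic energy of the steady state: e_Q(x,v). -/
def eQfun (Q : Ph → ℝ) (z : Ph) : ℝ := microE (pot Q) z

/-- The projection Πh onto functions of the microscopic energy e_Q. -/
def PiProj (Q : Ph → ℝ) (h : Sp → ℝ) (z : Ph) : ℝ :=
  (∫ y : Sp, Kfun (eQfun Q z - pot Q y) * h y) / (∫ y : Sp, Kfun (eQfun Q z - pot Q y))

/-- The second derivative D²J(φ_Q)(h,h). -/
def D2J (Q : Ph → ℝ) (F : ℝ → ℝ) (h : Sp → ℝ) : ℝ :=
  (∫ x : Sp, ‖gradient h x‖ ^ 2) -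
    ∫ z : Ph, |deriv F (eQfun Q z)| * (h z.1 - PiProj Q h z) ^ 2


/-! Integrating out the velocity gives `a_ψ(e) = |B₁| ∫ G(e - ψ x) dx` with
`G(t) = (t₊² + 2t₊)^{3/2}`, and `G' = 3K`. For `ψ = φ + λh` the map `(λ, e) ↦ ∫ G(e - φ - λh)`
is strictly differentiable on `e < 0`: the integrand vanishes off a compact set (where `φ, h` are
small), and on it local `L³` bounds dominate `G` and `3K (1 + |h|)`. Since `ψ ≤ -m/(1+|x|)`,
`a_ψ(e) → ∞` as `e ↑ 0` while `a_ψ(e) → 0` as `e → -∞`, so `a_ψ⁻¹(s)` is the unique negative root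
of `a_ψ(e) = s`. Its `e`-derivative `3∫K` is positive there, and the implicit function theorem
gives the derivative `∫K h / ∫K`, which is continuous in `λ`. -/

lemma csSup_setOf_lt_spec {f : ℝ → ℝ} {s : ℝ} (hcont : ContinuousOn f (Iio 0))
    (hmono : MonotoneOn f (Iio 0)) (hlow : ∃ e < 0, f e < s) (hhigh : ∃ e < 0, s ≤ f e) :
    sSup {e | e < 0 ∧ f e < s} < 0 ∧ f (sSup {e | e < 0 ∧ f e < s}) = s := by
  obtain ⟨e₁, he₁, hfe₁⟩ := hlow
  obtain ⟨e₂, he₂, hfe₂⟩ := hhigh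
  set S := {e | e < 0 ∧ f e < s}
  have hne : S.Nonempty := ⟨e₁, he₁, hfe₁⟩
  have hub : ∀ e ∈ S, e ≤ e₂ := fun e he =>
    le_of_not_gt fun h => (hfe₂.trans (hmono he₂ he.1 h.le)).not_gt he.2
  have hE : sSup S < 0 := (csSup_le hne hub).trans_lt he₂
  have hf : Tendsto f (𝓝 (sSup S)) (𝓝 (f (sSup S))) :=
    (hcont.continuousAt (Iio_mem_nhds hE)).tendsto
  refine ⟨hE, le_antisymm ?_ ?_⟩
  · refine le_of_tendsto (hf.mono_left (nhdsWithin_le_nhds (s := Iio (sSup S)))) ?_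
    filter_upwards [self_mem_nhdsWithin] with e (he : e < sSup S)
    obtain ⟨e', he'S, hee'⟩ := exists_lt_of_lt_csSup hne he
    exact ((hmono (hee'.trans he'S.1) he'S.1 hee'.le).trans_lt he'S.2).le
  · refine ge_of_tendsto (hf.mono_left (nhdsWithin_le_nhds (s := Ioi (sSup S)))) ?_
    filter_upwards [Ioo_mem_nhdsGT hE] with e he
    exact le_of_not_gt fun h => he.1.not_ge (le_csSup ⟨e₂, hub⟩ ⟨he.2, h⟩)

lemma hasDerivWithinAt_of_implicit {F : ℝ × ℝ → ℝ} {F' : ℝ × ℝ →L[ℝ] ℝ} {g : ℝ → ℝ}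
    {S U : Set ℝ} {x₀ : ℝ} (hF : HasStrictFDerivAt F F' (x₀, g x₀)) (hF' : F' (0, 1) ≠ 0)
    (hU : U ∈ 𝓝 (g x₀)) (huniq : ∀ x ∈ S, ∀ y ∈ U, F (x, y) = F (x₀, g x₀) → y = g x) :
    HasDerivWithinAt g (-F' (1, 0) / F' (0, 1)) S x₀ := by
  have hinv : (F' ∘L .inr ℝ ℝ ℝ).IsInvertible :=
    ⟨ContinuousLinearEquiv.unitsEquivAut ℝ (Units.mk0 _ hF'), by ext; simp⟩
  set ψ := hF.implicitFunctionOfProdDomain hinv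
  have hψ₀ : ψ x₀ = g x₀ :=
    (hF.eventually_apply_eq_iff_implicitFunctionOfProdDomain hinv).self_of_nhds.1 rfl
  have hψ : ψ =ᶠ[𝓝[S] x₀] g := by
    filter_upwards [nhdsWithin_le_nhds (hF.eventually_apply_implicitFunctionOfProdDomain hinv),
      nhdsWithin_le_nhds (hF.tendsto_implicitFunctionOfProdDomain hinv hU),
      self_mem_nhdsWithin] with x hFx hψx hx
    exact huniq x hx _ hψx hFx
  refine ((hF.hasStrictFDerivAt_implicitFunctionOfProdDomain hinv).hasFDerivAt.hasDerivAt
    |>.hasDerivWithinAt.congr_of_eventuallyEq hψ.symm hψ₀.symm).congr_deriv ?_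
  have hw₁ := hinv.self_apply_inverse (F' (1, 0))
  set w := (F' ∘L .inr ℝ ℝ ℝ).inverse (F' (1, 0))
  have hw : F' (0, w) = w * F' (0, 1) := by
    rw [← smul_eq_mul, ← map_smul, Prod.smul_mk, smul_zero, smul_eq_mul, mul_one]
  simp only [ContinuousLinearMap.coe_comp, Function.comp_apply, ContinuousLinearMap.inr_apply,
    hw] at hw₁
  rw [eq_div_iff hF', ← hw₁]
  simp [w]

lemma max_sq_sub_one_eq (t : ℝ) :
    max ((max (1 + t) 0) ^ 2 - 1) 0 = max t 0 * (max t 0 + 2) := by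
  rcases le_or_gt t 0 with ht | ht
  · have h0 : 0 ≤ max (1 + t) 0 := le_max_right _ _
    have h1 : max (1 + t) 0 ≤ 1 := max_le (by linarith) zero_le_one
    rw [max_eq_right (by nlinarith), max_eq_right ht]
    ring
  · rw [max_eq_left (by linarith : 0 ≤ 1 + t), max_eq_left ht.le, max_eq_left (by nlinarith)]
    ring

lemma Kfun_eq (t : ℝ) : Kfun t = √(max t 0 * (max t 0 + 2)) * (1 + t) := by
  rw [Kfun, max_sq_sub_one_eq]

lemma Kfun_of_nonpos {t : ℝ} (ht : t ≤ 0) : Kfun t = 0 := by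
  simp [Kfun_eq, max_eq_right ht]

lemma Kfun_pos {t : ℝ} (ht : 0 < t) : 0 < Kfun t := by
  rw [Kfun_eq, max_eq_left ht.le]
  exact mul_pos (Real.sqrt_pos.2 (by positivity)) (by linarith)

lemma Kfun_nonneg (t : ℝ) : 0 ≤ Kfun t := by
  rcases le_or_gt t 0 with ht | ht
  · rw [Kfun_of_nonpos ht]
  · exact (Kfun_pos ht).le

lemma Kfun_ne_zero_iff {t : ℝ} : Kfun t ≠ 0 ↔ 0 < t :=
  ⟨fun h => lt_of_not_ge fun ht => h (Kfun_of_nonpos ht), fun ht => (Kfun_pos ht).ne'⟩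

lemma continuous_Kfun : Continuous Kfun := by
  unfold Kfun
  fun_prop

lemma sqrt_mul_add_two_le {m : ℝ} (hm : 0 ≤ m) : √(m * (m + 2)) ≤ m + 2 :=
  Real.sqrt_le_iff.2 ⟨by linarith, by nlinarith⟩

lemma Kfun_le (t : ℝ) : Kfun t ≤ (max t 0 + 2) ^ 2 := by
  rcases le_or_gt t 0 with ht | ht
  · rw [Kfun_of_nonpos ht]
    positivity
  · rw [Kfun_eq, max_eq_left ht.le, sq]
    exact mul_le_mul (sqrt_mul_add_two_le ht.le) (by linarith) (by linarith) (by linarith)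

def Gfun (t : ℝ) : ℝ := √(max t 0 * (max t 0 + 2)) ^ 3

lemma Gfun_of_nonpos {t : ℝ} (ht : t ≤ 0) : Gfun t = 0 := by
  simp [Gfun, max_eq_right ht]

lemma Gfun_nonneg (t : ℝ) : 0 ≤ Gfun t := by
  unfold Gfun
  positivity

lemma Gfun_ne_zero_iff {t : ℝ} : Gfun t ≠ 0 ↔ 0 < t := by
  refine ⟨fun h => lt_of_not_ge fun ht => h (Gfun_of_nonpos ht), fun ht => ?_⟩
  rw [Gfun, max_eq_left ht.le]
  exact pow_ne_zero 3 (Real.sqrt_pos.2 (by positivity)).ne'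

lemma Gfun_mono : Monotone Gfun := by
  intro a b hab
  have h0 : 0 ≤ max a 0 := le_max_right _ _
  have h1 : max a 0 ≤ max b 0 := max_le_max hab le_rfl
  exact pow_le_pow_left₀ (Real.sqrt_nonneg _) (Real.sqrt_le_sqrt (by nlinarith)) 3

lemma Gfun_lt_Gfun {a b : ℝ} (ha : 0 < a) (hab : a < b) : Gfun a < Gfun b := by
  rw [Gfun, Gfun, max_eq_left ha.le, max_eq_left (ha.trans hab).le]
  exact pow_lt_pow_left₀ (Real.sqrt_lt_sqrt (by positivity) (by nlinarith)) (Real.sqrt_nonneg _)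
    three_ne_zero

lemma Gfun_le (t : ℝ) : Gfun t ≤ (max t 0 + 2) ^ 3 :=
  pow_le_pow_left₀ (Real.sqrt_nonneg _) (sqrt_mul_add_two_le (le_max_right _ _)) 3

lemma min_le_Gfun {t : ℝ} (ht : 0 ≤ t) : min 1 (4 * t ^ 2) ≤ Gfun t := by
  have h2t : 0 ≤ 2 * t := by linarith
  have hsqrt : √(2 * t) ^ 3 ≤ Gfun t := by
    rw [Gfun, max_eq_left ht]
    exact pow_le_pow_left₀ (Real.sqrt_nonneg _) (Real.sqrt_le_sqrt (by nlinarith)) 3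
  have hcube : √(2 * t) ^ 3 = 2 * t * √(2 * t) := by
    rw [pow_succ, Real.sq_sqrt h2t]
  rcases le_or_gt 1 (2 * t) with h | h
  · refine (min_le_left _ _).trans (le_trans ?_ hsqrt)
    exact one_le_pow₀ (Real.one_le_sqrt.2 h)
  · refine (min_le_right _ _).trans (le_trans ?_ hsqrt)
    have : 2 * t ≤ √(2 * t) := by
      rw [Real.le_sqrt h2t h2t]
      nlinarith
    rw [hcube]
    nlinarith

lemma continuous_Gfun : Continuous Gfun := by
  unfold Gfun
  fun_prop

lemma hasDerivAt_Gfun_of_ne {t : ℝ} (ht : t ≠ 0) : HasDerivAt Gfun (3 * Kfun t) t := by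
  rcases ht.lt_or_gt with ht | ht
  · rw [Kfun_of_nonpos ht.le, mul_zero]
    refine (hasDerivAt_const t (0 : ℝ)).congr_of_eventuallyEq ?_
    filter_upwards [Iio_mem_nhds ht] with u hu
    exact Gfun_of_nonpos (le_of_lt hu)
  · have hX : 0 < t * (t + 2) := by positivity
    have hd : HasDerivAt (fun u => √(u * (u + 2)) ^ 3) (3 * Kfun t) t := by
      refine ((((hasDerivAt_id t).mul ((hasDerivAt_id t).add_const 2)).sqrt hX.ne').pow 3)
        |>.congr_deriv ?_
      rw [Kfun_eq, max_eq_left ht.le]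
      have hs := Real.sq_sqrt hX.le
      have hns := (Real.sqrt_pos.2 hX).ne'
      simp only [Pi.mul_apply, id, Nat.cast_ofNat]
      field_simp
      rw [show 3 - 1 = 2 from rfl, hs]
      ring
    refine hd.congr_of_eventuallyEq ?_
    filter_upwards [Ioi_mem_nhds ht] with u hu
    rw [Gfun, max_eq_left (le_of_lt hu)]

lemma hasDerivAt_Gfun (t : ℝ) : HasDerivAt Gfun (3 * Kfun t) t := by
  rcases eq_or_ne t 0 with rfl | ht
  · exact hasDerivAt_of_hasDerivAt_of_ne (fun _ hy => hasDerivAt_Gfun_of_ne hy)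
      continuous_Gfun.continuousAt (continuous_Kfun.continuousAt.const_mul 3)
  · exact hasDerivAt_Gfun_of_ne ht

lemma one_le_vW (v : Sp) : 1 ≤ vW v :=
  Real.one_le_sqrt.2 (by nlinarith [sq_nonneg ‖v‖])

lemma continuous_vW : Continuous vW := by
  unfold vW
  fun_prop

def unitBallVol : ℝ≥0∞ := volume (Metric.ball (0 : Sp) 1)

lemma unitBallVol_pos : 0 < unitBallVol := Metric.measure_ball_pos _ _ one_pos

lemma unitBallVol_ne_top : unitBallVol ≠ ∞ := measure_ball_lt_top.ne

lemma unitBallVol_toReal_pos : 0 < unitBallVol.toReal :=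
  ENNReal.toReal_pos unitBallVol_pos.ne' unitBallVol_ne_top

lemma volume_setOf_vW_lt (t : ℝ) :
    volume {v : Sp | vW v < 1 + t} = unitBallVol * ENNReal.ofReal (Gfun t) := by
  rcases le_or_gt t 0 with ht | ht
  · have : {v : Sp | vW v < 1 + t} = ∅ :=
      eq_empty_of_forall_notMem fun v hv => by linarith [one_le_vW v, hv.out]
    simp [this, Gfun_of_nonpos ht]
  · have hball : {v : Sp | vW v < 1 + t} = Metric.ball 0 √(t * (t + 2)) := by
      ext v
      rw [mem_ofPred_eq, Metric.mem_ball, dist_zero_right, vW,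
        Real.sqrt_lt' (by linarith), Real.lt_sqrt (norm_nonneg v)]
      constructor <;> intro h <;> nlinarith
    rw [hball, Measure.addHaar_ball _ _ (Real.sqrt_nonneg _), finrank_euclideanSpace_fin,
      mul_comm, Gfun, max_eq_left ht.le]
    rfl

lemma volume_eq_prod_Ph : (volume : Measure Ph) = (volume : Measure Sp).prod volume :=
  Measure.volume_eq_prod _ _

lemma aJacE_congr {u u' : Sp → ℝ} (h : u =ᵐ[volume] u') (e : ℝ) :
    aJacE u e = aJacE u' e := by
  have hfst : (fun z : Ph => u z.1) =ᵐ[volume] fun z => u' z.1 := by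
    rw [volume_eq_prod_Ph]
    exact Measure.quasiMeasurePreserving_fst.ae_eq h
  refine measure_congr ?_
  filter_upwards [hfst] with z hz
  change (vW z.2 - 1 + u z.1 < e) = (vW z.2 - 1 + u' z.1 < e)
  rw [hz]

lemma aJacE_eq_lintegral_of_measurable {u : Sp → ℝ} (hu : Measurable u) (e : ℝ) :
    aJacE u e = unitBallVol * ∫⁻ x, ENNReal.ofReal (Gfun (e - u x)) := by
  have hmeas : MeasurableSet {z : Ph | microE u z < e} :=
    measurableSet_lt (((continuous_vW.measurable.comp measurable_snd).sub_const 1).add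
      (hu.comp measurable_fst)) measurable_const
  rw [aJacE, volume_eq_prod_Ph, Measure.prod_apply hmeas,
    ← lintegral_const_mul' _ _ unitBallVol_ne_top]
  refine lintegral_congr fun x => ?_
  rw [← volume_setOf_vW_lt]
  congr 1
  ext v
  simp only [mem_preimage, mem_ofPred_eq, microE]
  constructor <;> intro h <;> linarith

lemma aJacE_eq_lintegral {u : Sp → ℝ} (hu : AEMeasurable u) (e : ℝ) :
    aJacE u e = unitBallVol * ∫⁻ x, ENNReal.ofReal (Gfun (e - u x)) := by
  rw [aJacE_congr hu.ae_eq_mk, aJacE_eq_lintegral_of_measurable hu.measurable_mk]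
  congr 1
  refine lintegral_congr_ae ?_
  filter_upwards [hu.ae_eq_mk] with x hx
  rw [hx]

lemma aJac_eq_integral {u : Sp → ℝ} (hu : AEMeasurable u) {e : ℝ}
    (hint : Integrable (fun x => Gfun (e - u x))) :
    aJac u e = unitBallVol.toReal * ∫ x, Gfun (e - u x) := by
  rw [aJac, aJacE_eq_lintegral hu,
    ← ofReal_integral_eq_lintegral_ofReal hint (ae_of_all _ fun x => Gfun_nonneg _),
    ENNReal.toReal_mul, ENNReal.toReal_ofReal (integral_nonneg fun x => Gfun_nonneg _)]

lemma lintegral_div_one_add_norm_sq_eq_top {c : ℝ} (hc : 0 < c) :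
    ∫⁻ x : Sp, ENNReal.ofReal (c / (1 + ‖x‖) ^ 2) = ∞ := by
  have hball : ∀ r : ℝ, 1 ≤ r →
      ENNReal.ofReal (c / 4 * r) * unitBallVol ≤ ∫⁻ x : Sp, ENNReal.ofReal (c / (1 + ‖x‖) ^ 2) := by
    intro r hr
    calc ENNReal.ofReal (c / 4 * r) * unitBallVol
        ≤ ENNReal.ofReal (c / (1 + r) ^ 2) * volume (Metric.closedBall (0 : Sp) r) := by
          rw [Measure.addHaar_closedBall _ _ (by linarith), finrank_euclideanSpace_fin, ← mul_assoc,
            ← ENNReal.ofReal_mul (by positivity)]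
          refine mul_le_mul_left (ENNReal.ofReal_le_ofReal ?_) _
          rw [div_mul_eq_mul_div, div_mul_eq_mul_div, div_le_div_iff₀ (by norm_num) (by positivity)]
          have : (1 + r) ^ 2 ≤ 4 * r ^ 2 := by nlinarith
          nlinarith [mul_le_mul_of_nonneg_left this (by positivity : 0 ≤ c * r)]
      _ = ∫⁻ _ in Metric.closedBall (0 : Sp) r, ENNReal.ofReal (c / (1 + r) ^ 2) :=
          (setLIntegral_const _ _).symm
      _ ≤ ∫⁻ x in Metric.closedBall (0 : Sp) r, ENNReal.ofReal (c / (1 + ‖x‖) ^ 2) := by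
          refine setLIntegral_mono' measurableSet_closedBall fun x hx => ?_
          rw [Metric.mem_closedBall, dist_zero_right] at hx
          gcongr
      _ ≤ _ := setLIntegral_le_lintegral _ _
  have htop : Tendsto (fun r : ℝ => ENNReal.ofReal (c / 4 * r) * unitBallVol) atTop (𝓝 ∞) := by
    simpa [ENNReal.top_mul unitBallVol_pos.ne'] using
      ENNReal.Tendsto.mul_const (b := unitBallVol)
        (ENNReal.tendsto_ofReal_atTop.comp (tendsto_id.const_mul_atTop (by positivity)))
        (Or.inl ENNReal.top_ne_zero)
  exact eq_top_iff.2 (le_of_tendsto htop ((eventually_ge_atTop (1 : ℝ)).mono hball))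

lemma aJacE_zero_eq_top {u : Sp → ℝ} (hu : AEMeasurable u) {m : ℝ} (hm : 0 < m)
    (hlow : ∀ x, u x ≤ -(m / (1 + ‖x‖))) : aJacE u 0 = ∞ := by
  rw [aJacE_eq_lintegral hu, eq_top_iff,
    ← ENNReal.mul_top unitBallVol_pos.ne', ← lintegral_div_one_add_norm_sq_eq_top
      (show 0 < min 1 (4 * m ^ 2) by positivity)]
  gcongr with x
  have hr : 0 < 1 + ‖x‖ := by positivity
  have ht : 0 ≤ m / (1 + ‖x‖) := by positivity
  refine le_trans ?_ ((min_le_Gfun ht).trans (Gfun_mono (by linarith [hlow x])))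
  rw [div_le_iff₀ (by positivity)]
  rcases le_total 1 (4 * (m / (1 + ‖x‖)) ^ 2) with h | h
  · rw [min_eq_left h]
    exact (min_le_left _ _).trans (by nlinarith [norm_nonneg x])
  · rw [min_eq_right h, div_pow, mul_div_assoc', div_mul_cancel₀ _ (by positivity)]
    exact min_le_right _ _

lemma exists_lt_aJacE_of_eq_top {u : Sp → ℝ} (hu : aJacE u 0 = ∞) {S : ℝ≥0∞} (hS : S < ∞) :
    ∃ e < 0, S < aJacE u e := by
  have hunion : ⋃ n : ℕ, {z : Ph | microE u z < -(1 / (n + 1))} = {z | microE u z < 0} := by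
    ext z
    simp only [mem_iUnion, mem_ofPred_eq]
    refine ⟨fun ⟨n, hn⟩ => hn.trans (neg_lt_zero.2 (by positivity)), fun hz => ?_⟩
    obtain ⟨n, hn⟩ := exists_nat_one_div_lt (neg_pos.2 hz)
    exact ⟨n, by linarith⟩
  have hmono : Monotone fun n : ℕ => {z : Ph | microE u z < -(1 / (n + 1))} :=
    fun n n' hnn' z (hz : microE u z < _) =>
      show microE u z < _ from hz.trans_le (neg_le_neg (Nat.one_div_le_one_div hnn'))
  have htend := tendsto_measure_iUnion_atTop (μ := volume) hmono
  rw [hunion] at htend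
  obtain ⟨n, hn⟩ := (htend.eventually (lt_mem_nhds (hu ▸ hS))).exists
  exact ⟨-(1 / (n + 1)), neg_lt_zero.2 (by positivity), hn⟩

structure IsLocL3Vanishing (u : Sp → ℝ) : Prop where
  aestronglyMeasurable : AEStronglyMeasurable u volume
  memLp_restrict : ∀ K : Set Sp, IsCompact K → MemLp u 3 (volume.restrict K)
  tendsto_cocompact : Tendsto u (cocompact Sp) (𝓝 0)

lemma IsPhiq.isLocL3Vanishing {q : ℝ} (hq : 3 ≤ q) {φ : Sp → ℝ} (hφ : IsPhiq q φ) :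
    IsLocL3Vanishing φ where
  aestronglyMeasurable := hφ.lq.aestronglyMeasurable
  memLp_restrict K hK := by
    have : IsFiniteMeasure (volume.restrict K) := isFiniteMeasure_restrict.2 hK.measure_lt_top.ne
    refine (hφ.lq.restrict K).mono_exponent ?_
    rw [← ENNReal.ofReal_ofNat]
    exact ENNReal.ofReal_le_ofReal hq
  tendsto_cocompact := hφ.zeroAtInfty

lemma IsLocL3Vanishing.sub {u v : Sp → ℝ} (hu : IsLocL3Vanishing u) (hv : IsLocL3Vanishing v) :
    IsLocL3Vanishing fun x => u x - v x where
  aestronglyMeasurable := hu.aestronglyMeasurable.sub hv.aestronglyMeasurable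
  memLp_restrict K hK := (hu.memLp_restrict K hK).sub (hv.memLp_restrict K hK)
  tendsto_cocompact := by simpa using hu.tendsto_cocompact.sub hv.tendsto_cocompact

def jacArg (φ h : Sp → ℝ) (p : ℝ × ℝ) (x : Sp) : ℝ := p.2 - φ x - p.1 * h x

def jacInt (φ h : Sp → ℝ) (p : ℝ × ℝ) : ℝ := ∫ x, Gfun (jacArg φ h p x)

def jacDerivIntegrand (φ h : Sp → ℝ) (p : ℝ × ℝ) (x : Sp) : ℝ × ℝ →L[ℝ] ℝ :=
  (3 * Kfun (jacArg φ h p x)) •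
    (ContinuousLinearMap.snd ℝ ℝ ℝ - h x • ContinuousLinearMap.fst ℝ ℝ ℝ)

def jacDeriv (φ h : Sp → ℝ) (p : ℝ × ℝ) : ℝ × ℝ →L[ℝ] ℝ := ∫ x, jacDerivIntegrand φ h p x

section JacobianIntegral

variable {φ h : Sp → ℝ}

lemma jacArg_le (p : ℝ × ℝ) (x : Sp) : jacArg φ h p x ≤ p.2 + |φ x| + |p.1| * |h x| := by
  have h1 : -φ x ≤ |φ x| := neg_le_abs _
  have h2 : -(p.1 * h x) ≤ |p.1| * |h x| := (neg_le_abs _).trans (abs_mul _ _).le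
  unfold jacArg
  linarith

lemma hasFDerivAt_Gfun_jacArg (p : ℝ × ℝ) (x : Sp) :
    HasFDerivAt (fun p => Gfun (jacArg φ h p x)) (jacDerivIntegrand φ h p x) p :=
  (hasDerivAt_Gfun _).comp_hasFDerivAt p
    ((hasFDerivAt_snd.sub_const (φ x)).sub (hasFDerivAt_fst.mul_const (h x)))

lemma norm_jacDerivIntegrand_le (p : ℝ × ℝ) (x : Sp) :
    ‖jacDerivIntegrand φ h p x‖ ≤ 3 * Kfun (jacArg φ h p x) * (1 + |h x|) := by
  have hK := Kfun_nonneg (jacArg φ h p x)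
  have hfst := ContinuousLinearMap.norm_fst_le ℝ ℝ ℝ
  have hsnd := ContinuousLinearMap.norm_snd_le ℝ ℝ ℝ
  rw [jacDerivIntegrand, norm_smul, Real.norm_of_nonneg (by positivity)]
  gcongr
  calc _ ≤ ‖ContinuousLinearMap.snd ℝ ℝ ℝ‖ + ‖h x • ContinuousLinearMap.fst ℝ ℝ ℝ‖ :=
        norm_sub_le _ _
    _ ≤ 1 + |h x| * 1 := by
        rw [norm_smul, Real.norm_eq_abs]
        gcongr
    _ = 1 + |h x| := by ring

variable (hφ : IsLocL3Vanishing φ) (hh : IsLocL3Vanishing h)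
include hφ hh

lemma integrableOn_cube_of_isCompact {C : Set Sp} (hC : IsCompact C) {c a : ℝ} (hc : 0 ≤ c)
    (ha : 0 ≤ a) :
    IntegrableOn (fun x => (c + |φ x| + a * |h x|) ^ 3) C := by
  have : IsFiniteMeasure (volume.restrict C) := isFiniteMeasure_restrict.2 hC.measure_lt_top.ne
  have hW : MemLp (fun x => c + |φ x| + a * |h x|) 3 (volume.restrict C) :=
    ((memLp_const c).add (hφ.memLp_restrict C hC).abs).add
      ((hh.memLp_restrict C hC).abs.const_mul a)
  refine (hW.integrable_norm_rpow (by norm_num) (by norm_num)).congr (ae_of_all _ fun x => ?_)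
  dsimp only
  rw [Real.norm_of_nonneg (by positivity), ENNReal.toReal_ofNat, Real.rpow_ofNat]

lemma exists_integrable_bound_jacArg {p₀ : ℝ × ℝ} (hp₀ : p₀.2 < 0) :
    ∃ bnd : Sp → ℝ, Integrable bnd ∧ ∀ᶠ p in 𝓝 p₀, ∀ x,
      Gfun (jacArg φ h p x) ≤ bnd x ∧ Kfun (jacArg φ h p x) * (1 + |h x|) ≤ bnd x := by
  set a := |p₀.1| + 1
  set w : Sp → ℝ := fun x => |φ x| + a * |h x|
  have hw : Tendsto w (cocompact Sp) (𝓝 0) := by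
    simpa [w] using hφ.tendsto_cocompact.abs.add (hh.tendsto_cocompact.abs.const_mul a)
  obtain ⟨C, hC, hwC⟩ := hasBasis_cocompact.eventually_iff.1
    (hw.eventually (ge_mem_nhds (by linarith : (0 : ℝ) < -p₀.2 / 2)))
  refine ⟨C.indicator fun x => (2 + |φ x| + a * |h x|) ^ 3,
    (integrableOn_cube_of_isCompact hφ hh hC (by norm_num) (by positivity)).integrable_indicator
      hC.measurableSet, ?_⟩
  have hnear : ∀ᶠ p in 𝓝 p₀, |p.1| < a ∧ p.2 < p₀.2 / 2 :=
    ((continuous_fst.abs.continuousAt).eventually_lt continuousAt_const (by linarith)).and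
      ((continuous_snd.continuousAt).eventually_lt continuousAt_const (by linarith))
  filter_upwards [hnear] with p ⟨hp1, hp2⟩ x
  have harg : jacArg φ h p x ≤ p.2 + w x := by
    have := mul_le_mul_of_nonneg_right hp1.le (abs_nonneg (h x))
    linarith [jacArg_le (φ := φ) (h := h) p x]
  by_cases hx : x ∈ C
  · rw [indicator_of_mem hx]
    set W := 2 + |φ x| + a * |h x|
    have hW : max (jacArg φ h p x) 0 + 2 ≤ W := by
      have : max (jacArg φ h p x) 0 ≤ w x := max_le (by linarith) (by positivity)
      linarith
    have hhW : 1 + |h x| ≤ W := by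
      have : |h x| ≤ a * |h x| := le_mul_of_one_le_left (abs_nonneg _) (by simp [a])
      linarith [abs_nonneg (φ x)]
    refine ⟨(Gfun_le _).trans (pow_le_pow_left₀ (by positivity) hW 3), ?_⟩
    calc Kfun (jacArg φ h p x) * (1 + |h x|) ≤ W ^ 2 * W :=
          mul_le_mul ((Kfun_le _).trans (pow_le_pow_left₀ (by positivity) hW 2)) hhW
            (by positivity) (by positivity)
      _ = W ^ 3 := by ring
  · have hneg : jacArg φ h p x ≤ 0 := by linarith [hwC hx]
    rw [indicator_of_notMem hx, Gfun_of_nonpos hneg, Kfun_of_nonpos hneg, zero_mul]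
    exact ⟨le_rfl, le_rfl⟩

lemma aestronglyMeasurable_jacArg (p : ℝ × ℝ) : AEStronglyMeasurable (jacArg φ h p) volume :=
  (aestronglyMeasurable_const.sub hφ.aestronglyMeasurable).sub
    (hh.aestronglyMeasurable.const_mul p.1)

lemma aestronglyMeasurable_jacDerivIntegrand (p : ℝ × ℝ) :
    AEStronglyMeasurable (jacDerivIntegrand φ h p) volume := by
  have hcont : Continuous fun y : ℝ × ℝ => (3 * Kfun y.1) •
      (ContinuousLinearMap.snd ℝ ℝ ℝ - y.2 • ContinuousLinearMap.fst ℝ ℝ ℝ) := by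
    have := continuous_Kfun
    fun_prop
  exact hcont.comp_aestronglyMeasurable (f := fun x => (jacArg φ h p x, h x))
    ((aestronglyMeasurable_jacArg hφ hh p).prodMk hh.aestronglyMeasurable)

lemma integrable_Gfun_jacArg {p : ℝ × ℝ} (hp : p.2 < 0) :
    Integrable fun x => Gfun (jacArg φ h p x) := by
  obtain ⟨bnd, hbnd, hle⟩ := exists_integrable_bound_jacArg hφ hh hp
  refine hbnd.mono' (continuous_Gfun.comp_aestronglyMeasurable
    (aestronglyMeasurable_jacArg hφ hh p)) (ae_of_all _ fun x => ?_)
  rw [Real.norm_of_nonneg (Gfun_nonneg _)]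
  exact (hle.self_of_nhds x).1

lemma integrable_Kfun_jacArg_mul_one_add {p : ℝ × ℝ} (hp : p.2 < 0) :
    Integrable fun x => Kfun (jacArg φ h p x) * (1 + |h x|) := by
  obtain ⟨bnd, hbnd, hle⟩ := exists_integrable_bound_jacArg hφ hh hp
  refine hbnd.mono' ((continuous_Kfun.comp_aestronglyMeasurable
    (aestronglyMeasurable_jacArg hφ hh p)).mul
      (aestronglyMeasurable_const.add hh.aestronglyMeasurable.norm)) (ae_of_all _ fun x => ?_)
  rw [Real.norm_of_nonneg (mul_nonneg (Kfun_nonneg _) (by positivity))]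
  exact (hle.self_of_nhds x).2

lemma integrable_Kfun_jacArg {p : ℝ × ℝ} (hp : p.2 < 0) :
    Integrable fun x => Kfun (jacArg φ h p x) :=
  (integrable_Kfun_jacArg_mul_one_add hφ hh hp).mono'
    (continuous_Kfun.comp_aestronglyMeasurable (aestronglyMeasurable_jacArg hφ hh p))
    (ae_of_all _ fun x => by
      rw [Real.norm_of_nonneg (Kfun_nonneg _)]
      exact le_mul_of_one_le_right (Kfun_nonneg _) (by simp))

lemma integrable_jacDerivIntegrand {p : ℝ × ℝ} (hp : p.2 < 0) :
    Integrable (jacDerivIntegrand φ h p) :=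
  ((integrable_Kfun_jacArg_mul_one_add hφ hh hp).const_mul 3).mono'
    (aestronglyMeasurable_jacDerivIntegrand hφ hh p)
    (ae_of_all _ fun x => (norm_jacDerivIntegrand_le p x).trans_eq (mul_assoc _ _ _))

lemma hasFDerivAt_jacInt {p₀ : ℝ × ℝ} (hp₀ : p₀.2 < 0) :
    HasFDerivAt (jacInt φ h) (jacDeriv φ h p₀) p₀ := by
  obtain ⟨bnd, hbnd, hle⟩ := exists_integrable_bound_jacArg hφ hh hp₀
  refine hasFDerivAt_integral_of_dominated_of_fderiv_le (bound := fun x => 3 * bnd x) hle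
    (Eventually.of_forall fun p => continuous_Gfun.comp_aestronglyMeasurable
      (aestronglyMeasurable_jacArg hφ hh p)) (integrable_Gfun_jacArg hφ hh hp₀)
    (aestronglyMeasurable_jacDerivIntegrand hφ hh p₀) (ae_of_all _ fun x p hp => ?_)
    (hbnd.const_mul 3) (ae_of_all _ fun x p _ => hasFDerivAt_Gfun_jacArg p x)
  refine (norm_jacDerivIntegrand_le p x).trans ?_
  rw [mul_assoc]
  exact mul_le_mul_of_nonneg_left (hp x).2 (by norm_num)

lemma continuousAt_jacDeriv {p₀ : ℝ × ℝ} (hp₀ : p₀.2 < 0) :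
    ContinuousAt (jacDeriv φ h) p₀ := by
  obtain ⟨bnd, hbnd, hle⟩ := exists_integrable_bound_jacArg hφ hh hp₀
  refine continuousAt_of_dominated (bound := fun x => 3 * bnd x)
    (Eventually.of_forall (aestronglyMeasurable_jacDerivIntegrand hφ hh))
    (hle.mono fun p hp => ae_of_all _ fun x => ?_) (hbnd.const_mul 3)
    (ae_of_all _ fun x => ?_)
  · refine (norm_jacDerivIntegrand_le p x).trans ?_
    rw [mul_assoc]
    exact mul_le_mul_of_nonneg_left (hp x).2 (by norm_num)
  · have := continuous_Kfun
    unfold jacDerivIntegrand jacArg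
    fun_prop

lemma hasStrictFDerivAt_jacInt {p₀ : ℝ × ℝ} (hp₀ : p₀.2 < 0) :
    HasStrictFDerivAt (jacInt φ h) (jacDeriv φ h p₀) p₀ :=
  hasStrictFDerivAt_of_hasFDerivAt_of_continuousAt
    ((continuous_snd.continuousAt.eventually_lt continuousAt_const hp₀).mono
      fun _ hp => hasFDerivAt_jacInt hφ hh hp)
    (continuousAt_jacDeriv hφ hh hp₀)

lemma jacDeriv_apply_fst {p : ℝ × ℝ} (hp : p.2 < 0) :
    jacDeriv φ h p (1, 0) = -(3 * ∫ x, Kfun (jacArg φ h p x) * h x) := by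
  rw [jacDeriv, ContinuousLinearMap.integral_apply (integrable_jacDerivIntegrand hφ hh hp),
    ← integral_const_mul, ← integral_neg]
  congr 1 with x
  simp [jacDerivIntegrand]
  ring

lemma jacDeriv_apply_snd {p : ℝ × ℝ} (hp : p.2 < 0) :
    jacDeriv φ h p (0, 1) = 3 * ∫ x, Kfun (jacArg φ h p x) := by
  rw [jacDeriv, ContinuousLinearMap.integral_apply (integrable_jacDerivIntegrand hφ hh hp),
    ← integral_const_mul]
  congr 1 with x
  simp [jacDerivIntegrand]

end JacobianIntegral

section JacobianInverse

variable {φ h : Sp → ℝ}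

lemma jacArg_mk (l e : ℝ) (x : Sp) : jacArg φ h (l, e) x = e - (φ x + l * h x) := by
  unfold jacArg
  ring

variable (hφ : IsLocL3Vanishing φ) (hh : IsLocL3Vanishing h)
include hφ hh

lemma aemeasurable_add_mul (l : ℝ) : AEMeasurable (fun x => φ x + l * h x) :=
  (hφ.aestronglyMeasurable.add (hh.aestronglyMeasurable.const_mul l)).aemeasurable

lemma aJac_eq_jacInt {l e : ℝ} (he : e < 0) :
    aJac (fun x => φ x + l * h x) e = unitBallVol.toReal * jacInt φ h (l, e) := by
  have hint := integrable_Gfun_jacArg hφ hh (p := (l, e)) he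
  simp only [jacArg_mk] at hint
  simp only [aJac_eq_integral (aemeasurable_add_mul hφ hh l) hint, jacInt, jacArg_mk]

lemma aJacE_ne_top {l e : ℝ} (he : e < 0) : aJacE (fun x => φ x + l * h x) e ≠ ∞ := by
  have hint := integrable_Gfun_jacArg hφ hh (p := (l, e)) he
  simp only [jacArg_mk] at hint
  rw [aJacE_eq_lintegral (aemeasurable_add_mul hφ hh l)]
  exact ENNReal.mul_ne_top unitBallVol_ne_top hint.lintegral_lt_top.ne

lemma monotoneOn_jacInt (l : ℝ) : MonotoneOn (fun e => jacInt φ h (l, e)) (Iio 0) :=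
  fun _ ha _ hb hab => integral_mono (integrable_Gfun_jacArg hφ hh (p := (l, _)) ha)
    (integrable_Gfun_jacArg hφ hh (p := (l, _)) hb)
    fun x => Gfun_mono (by simp only [jacArg]; linarith)

lemma jacInt_lt_jacInt {l a b : ℝ} (hab : a < b) (hb : b < 0) (hpos : 0 < jacInt φ h (l, a)) :
    jacInt φ h (l, a) < jacInt φ h (l, b) := by
  have hia := integrable_Gfun_jacArg hφ hh (p := (l, a)) (hab.trans hb)
  have hib := integrable_Gfun_jacArg hφ hh (p := (l, b)) hb
  have hsupp := (integral_pos_iff_support_of_nonneg (fun x => Gfun_nonneg _) hia).1 hpos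
  have hdiff : 0 < ∫ x, (Gfun (jacArg φ h (l, b) x) - Gfun (jacArg φ h (l, a) x)) := by
    refine (integral_pos_iff_support_of_nonneg (fun x => sub_nonneg.2 (Gfun_mono ?_))
      (hib.sub hia)).2 (hsupp.trans_le (measure_mono fun x hx => ?_))
    · simp only [jacArg]
      linarith
    · refine sub_ne_zero.2 (Gfun_lt_Gfun (Gfun_ne_zero_iff.1 hx) ?_).ne'
      simp only [jacArg]
      linarith
  rw [integral_sub hib hia] at hdiff
  exact sub_pos.1 hdiff

lemma integral_Kfun_jacArg_pos {p : ℝ × ℝ} (hp : p.2 < 0) (hpos : 0 < jacInt φ h p) :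
    0 < ∫ x, Kfun (jacArg φ h p x) := by
  have hsupp := (integral_pos_iff_support_of_nonneg (fun x => Gfun_nonneg _)
    (integrable_Gfun_jacArg hφ hh hp)).1 hpos
  refine (integral_pos_iff_support_of_nonneg (fun x => Kfun_nonneg _)
    (integrable_Kfun_jacArg hφ hh hp)).2 (hsupp.trans_eq (congrArg volume ?_))
  ext x
  exact Gfun_ne_zero_iff.trans Kfun_ne_zero_iff.symm

lemma tendsto_jacInt_atBot (l : ℝ) : Tendsto (fun e => jacInt φ h (l, e)) atBot (𝓝 0) := by
  have := tendsto_integral_filter_of_dominated_convergence (μ := volume) (l := atBot)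
    (F := fun e x => Gfun (jacArg φ h (l, e) x)) (f := fun _ => 0)
    (fun x => Gfun (jacArg φ h (l, -1) x))
    (Eventually.of_forall fun e => continuous_Gfun.comp_aestronglyMeasurable
      (aestronglyMeasurable_jacArg hφ hh (l, e)))
    ((eventually_le_atBot (-1)).mono fun e he => ae_of_all _ fun x => by
      rw [Real.norm_of_nonneg (Gfun_nonneg _)]
      exact Gfun_mono (by simp only [jacArg]; linarith))
    (integrable_Gfun_jacArg hφ hh (p := (l, -1)) (by norm_num))
    (ae_of_all _ fun x => tendsto_const_nhds.congr' ?_)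
  · simpa [jacInt] using this
  · filter_upwards [eventually_le_atBot (φ x + l * h x)] with e he
    rw [Gfun_of_nonpos (by rw [jacArg_mk]; linarith)]

lemma aJacInv_spec {m : ℝ} (hm : 0 < m) {l : ℝ} (hlow : ∀ x, φ x + l * h x ≤ -(m / (1 + ‖x‖)))
    {s : ℝ} (hs : 0 < s) :
    aJacInv (fun x => φ x + l * h x) s < 0 ∧
      unitBallVol.toReal * jacInt φ h (l, aJacInv (fun x => φ x + l * h x) s) = s ∧
      ∀ e < 0, unitBallVol.toReal * jacInt φ h (l, e) = s →
        e = aJacInv (fun x => φ x + l * h x) s := by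
  set f := fun e => unitBallVol.toReal * jacInt φ h (l, e)
  have hinv : aJacInv (fun x => φ x + l * h x) s = sSup {e | e < 0 ∧ f e < s} := by
    rw [aJacInv]
    congr 1
    ext e
    exact and_congr_right fun he => by rw [aJac_eq_jacInt hφ hh he]
  have hcont : ContinuousOn f (Iio 0) := fun e he =>
    (continuousAt_const.mul ((hasFDerivAt_jacInt hφ hh (p₀ := (l, e)) he).continuousAt.comp
      (continuousAt_const.prodMk continuousAt_id))).continuousWithinAt
  have hmono : MonotoneOn f (Iio 0) := fun a ha b hb hab =>
    mul_le_mul_of_nonneg_left (monotoneOn_jacInt hφ hh l ha hb hab) unitBallVol_toReal_pos.le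
  have hsmall : ∃ e < 0, f e < s := by
    have := ((tendsto_jacInt_atBot hφ hh l).const_mul unitBallVol.toReal).eventually
      (gt_mem_nhds (by simpa using hs))
    exact ((eventually_lt_atBot 0).and this).exists
  have hlarge : ∃ e < 0, s ≤ f e := by
    obtain ⟨e, he, hlt⟩ := exists_lt_aJacE_of_eq_top
      (aJacE_zero_eq_top (aemeasurable_add_mul hφ hh l) hm hlow) (ENNReal.ofReal_lt_top (r := s))
    refine ⟨e, he, ?_⟩
    show s ≤ unitBallVol.toReal * jacInt φ h (l, e)
    rw [← aJac_eq_jacInt hφ hh he]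
    exact ((ENNReal.ofReal_lt_iff_lt_toReal hs.le (aJacE_ne_top hφ hh he)).1 hlt).le
  obtain ⟨hE, hfE⟩ := csSup_setOf_lt_spec hcont hmono hsmall hlarge
  rw [hinv]
  refine ⟨hE, hfE, fun e he hfe => ?_⟩
  have hpos : ∀ a, f a = s → 0 < jacInt φ h (l, a) := fun a ha =>
    (mul_pos_iff_of_pos_left unitBallVol_toReal_pos).1 (show 0 < f a from ha ▸ hs)
  have hf : ∀ {a b}, a < b → b < 0 → f a = s → f a < f b := fun hab hb ha =>
    mul_lt_mul_of_pos_left (jacInt_lt_jacInt hφ hh hab hb (hpos _ ha)) unitBallVol_toReal_pos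
  have hfe' : f e = s := hfe
  rcases lt_trichotomy e (sSup {e | e < 0 ∧ f e < s}) with hlt | heq | hgt
  · exact absurd (hfe'.trans hfE.symm) (hf hlt hE hfe').ne
  · exact heq
  · exact absurd (hfE.trans hfe'.symm) (hf hgt he hfE).ne

lemma jacDeriv_aJacInv_apply_snd_pos {m : ℝ} (hm : 0 < m) {l : ℝ}
    (hlow : ∀ x, φ x + l * h x ≤ -(m / (1 + ‖x‖))) {s : ℝ} (hs : 0 < s) :
    0 < jacDeriv φ h (l, aJacInv (fun x => φ x + l * h x) s) (0, 1) := by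
  obtain ⟨hE, hfE, -⟩ := aJacInv_spec hφ hh hm hlow hs
  rw [jacDeriv_apply_snd hφ hh hE]
  exact mul_pos three_pos (integral_Kfun_jacArg_pos hφ hh hE
    ((mul_pos_iff_of_pos_left unitBallVol_toReal_pos).1 (hfE.symm ▸ hs)))

lemma div_integral_Kfun_jacArg {p : ℝ × ℝ} (hp : p.2 < 0) :
    (∫ x, Kfun (jacArg φ h p x) * h x) / ∫ x, Kfun (jacArg φ h p x) =
      -jacDeriv φ h p (1, 0) / jacDeriv φ h p (0, 1) := by
  rw [jacDeriv_apply_fst hφ hh hp, jacDeriv_apply_snd hφ hh hp, neg_neg,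
    mul_div_mul_left _ _ three_ne_zero]

lemma hasDerivWithinAt_aJacInv {m : ℝ} (hm : 0 < m) {S : Set ℝ}
    (hlow : ∀ l ∈ S, ∀ x, φ x + l * h x ≤ -(m / (1 + ‖x‖))) {s : ℝ} (hs : 0 < s) {l₀ : ℝ}
    (hl₀ : l₀ ∈ S) :
    HasDerivWithinAt (fun l => aJacInv (fun x => φ x + l * h x) s)
      ((∫ x, Kfun (jacArg φ h (l₀, aJacInv (fun x => φ x + l₀ * h x) s) x) * h x) /
        ∫ x, Kfun (jacArg φ h (l₀, aJacInv (fun x => φ x + l₀ * h x) s) x)) S l₀ := by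
  obtain ⟨hE, hfE, -⟩ := aJacInv_spec hφ hh hm (hlow l₀ hl₀) hs
  rw [div_integral_Kfun_jacArg hφ hh hE]
  exact hasDerivWithinAt_of_implicit (F := jacInt φ h)
    (g := fun l => aJacInv (fun x => φ x + l * h x) s) (hasStrictFDerivAt_jacInt hφ hh hE)
    (jacDeriv_aJacInv_apply_snd_pos hφ hh hm (hlow l₀ hl₀) hs).ne' (Iio_mem_nhds hE)
    fun l hl e he heq => (aJacInv_spec hφ hh hm (hlow l hl) hs).2.2 e he (by rw [heq, hfE])

lemma contDiffOn_aJacInv {m : ℝ} (hm : 0 < m) {S : Set ℝ} (hS : UniqueDiffOn ℝ S)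
    (hlow : ∀ l ∈ S, ∀ x, φ x + l * h x ≤ -(m / (1 + ‖x‖))) {s : ℝ} (hs : 0 < s) :
    ContDiffOn ℝ 1 (fun l => aJacInv (fun x => φ x + l * h x) s) S := by
  set E := fun l => aJacInv (fun x => φ x + l * h x) s
  have hderiv := fun l hl => hasDerivWithinAt_aJacInv hφ hh hm hlow hs (l₀ := l) hl
  refine (contDiffOn_one_iff_derivWithin hS).2 ⟨fun l hl => (hderiv l hl).differentiableWithinAt,
    ContinuousOn.congr (fun l hl => ?_) fun l hl => (hderiv l hl).derivWithin (hS l hl)⟩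
  have hE : ∀ l ∈ S, E l < 0 := fun l hl => (aJacInv_spec hφ hh hm (hlow l hl) hs).1
  have hD : ContinuousWithinAt (fun l => jacDeriv φ h (l, E l)) S l :=
    (continuousAt_jacDeriv hφ hh (hE l hl)).comp_continuousWithinAt
      (continuousWithinAt_id.prodMk (hderiv l hl).continuousWithinAt)
  refine ((hD.clm_apply continuousWithinAt_const).neg.div (hD.clm_apply continuousWithinAt_const)
    (jacDeriv_aJacInv_apply_snd_pos hφ hh hm (hlow l hl) hs).ne').congr
    (fun l' hl' => div_integral_Kfun_jacArg hφ hh (hE l' hl'))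
    (div_integral_Kfun_jacArg hφ hh (hE l hl))

end JacobianInverse

lemma le_neg_mPhi_div {φ : Sp → ℝ} (hφ : ∀ x, φ x ≤ 0) (x : Sp) :
    φ x ≤ -(mPhi φ / (1 + ‖x‖)) := by
  have hx : mPhi φ ≤ (1 + ‖x‖) * -φ x := by
    rw [← abs_of_nonpos (hφ x)]
    exact ciInf_le ⟨0, by rintro _ ⟨y, rfl⟩; positivity⟩ x
  rw [le_neg, div_le_iff₀ (by positivity)]
  linarith

lemma add_mul_sub_le_neg_min_mPhi_div {φ φt : Sp → ℝ} (hφ : ∀ x, φ x ≤ 0) (hφt : ∀ x, φt x ≤ 0)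
    {l : ℝ} (hl : l ∈ Icc (0 : ℝ) 1) (x : Sp) :
    φ x + l * (φt x - φ x) ≤ -(min (mPhi φ) (mPhi φt) / (1 + ‖x‖)) := by
  have h1 : φ x ≤ -(min (mPhi φ) (mPhi φt) / (1 + ‖x‖)) :=
    (le_neg_mPhi_div hφ x).trans (neg_le_neg (by gcongr; exact min_le_left _ _))
  have h2 : φt x ≤ -(min (mPhi φ) (mPhi φt) / (1 + ‖x‖)) :=
    (le_neg_mPhi_div hφt x).trans (neg_le_neg (by gcongr; exact min_le_right _ _))
  nlinarith [hl.1, hl.2]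

/-- differentiability of λ ↦ a_{φ+λh}^{-1}(s) and formula for the derivative. -/
theorem stmt7 (q : ℝ) (hq : 3 < q) (φ φt : Sp → ℝ) (hφ : IsPhiq q φ) (hφt : IsPhiq q φt)
    (s : ℝ) (hs : 0 < s) :
    ContDiffOn ℝ 1 (fun l : ℝ => aJacInv (fun x => φ x + l * (φt x - φ x)) s)
      (Icc (0 : ℝ) 1) ∧
    ∀ l ∈ Icc (0 : ℝ) 1,
      HasDerivWithinAt (fun l' : ℝ => aJacInv (fun x => φ x + l' * (φt x - φ x)) s)
        ((∫ x : Sp,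
            Kfun (aJacInv (fun y => φ y + l * (φt y - φ y)) s - φ x - l * (φt x - φ x))
              * (φt x - φ x)) /
          (∫ x : Sp,
            Kfun (aJacInv (fun y => φ y + l * (φt y - φ y)) s - φ x - l * (φt x - φ x))))
        (Icc (0 : ℝ) 1) l := by
  have hφ' := hφ.isLocL3Vanishing hq.le
  have hh := (hφt.isLocL3Vanishing hq.le).sub hφ'
  have hm := lt_min hφ.m_pos hφt.m_pos
  have hlow := fun l (hl : l ∈ Icc (0 : ℝ) 1) x =>
    add_mul_sub_le_neg_min_mPhi_div hφ.nonpos hφt.nonpos hl x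
  exact ⟨contDiffOn_aJacInv hφ' hh hm (uniqueDiffOn_Icc zero_lt_one) hlow hs,
    fun l hl => hasDerivWithinAt_aJacInv hφ' hh hm hlow hs hl⟩
end
end

section
/- Let p > 3/2, let f ∈ E_p be nonzero, let q > 3 and φ ∈ Φ_q. Then the rearrangement f^{*φ} of f with respect to the microscopic energy is equimeasurable with f: for all s ≥ 0, μ_{f^{*φ}}(s) = μ_f(s). In particular ∫_{ℝ⁶} β(f^{*φ}) dx dv = ∫_{ℝ⁶} β(f) dx dv for every C¹ function β : [0,∞) → [0,∞) with β(0) = 0. -/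
noncomputable section

open MeasureTheory Real Set Filter Topology
open scoped ENNReal NNReal

/-!
The Jacobian `a_φ(e) = meas{e(x,v) < e}` of the microscopic energy is continuous (its level sets
are null), finite for `e < 0` (as `φ ∈ L^q` with `q ≥ 3`) and infinite at `e = 0` (as
`|φ(x)| ≥ m(φ)/(1+|x|)`). Hence `(x,v) ↦ a_φ(e(x,v))` maps the phase-space measure on `{e < 0}`
to Lebesgue measure on `[0,∞)`, so `meas{e < 0, a_φ(e) < M} = M` for every `M`. For `t > 0`,
`s < f*(t)` iff `t < μ_f(s)`, so `{f^{*φ} > s}` is `{e < 0, a_φ(e) < μ_f(s)}` up to the null set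
`{a_φ(e) = 0}`, and has measure `μ_f(s)`. Equal distribution functions give equal push-forward
measures on `(0,∞)`, hence equal integrals of any `β` vanishing at `0`. Only the values of `φ`
off a null set matter, so `φ` may be replaced by a measurable representative.
-/

section LevelSets

variable {α : Type*} [MeasurableSpace α] {μ : Measure α} {E : α → ℝ}

lemma measure_setOf_lt_le_of_forall_lt {c : ℝ} {M : ℝ≥0∞}
    (h : ∀ r < c, μ {x | E x < r} ≤ M) : μ {x | E x < c} ≤ M := by
  obtain ⟨u, hu_mono, hu_lt, hu_lim⟩ := exists_seq_strictMono_tendsto c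
  have hU : {x | E x < c} = ⋃ n, {x | E x < u n} := by
    ext x
    simp only [mem_ofPred_eq, mem_iUnion]
    exact ⟨fun hx => (hu_lim.eventually (lt_mem_nhds hx)).exists,
      fun ⟨n, hn⟩ => hn.trans (hu_lt n)⟩
  rw [hU, Monotone.measure_iUnion fun m n hmn x hx => hx.trans_le (hu_mono.monotone hmn)]
  exact iSup_le fun n => h _ (hu_lt n)

lemma measure_setOf_gt_le_of_forall_gt {c : ℝ} {M : ℝ≥0∞}
    (h : ∀ r > c, μ {x | r < E x} ≤ M) : μ {x | c < E x} ≤ M := by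
  simpa only [neg_lt_neg_iff] using
    measure_setOf_lt_le_of_forall_lt (E := fun x => -E x) (c := -c)
      fun r hr => by simpa only [neg_lt] using h (-r) (lt_neg_of_lt_neg hr)

lemma le_measure_setOf_le_of_eventually (hE : AEMeasurable E μ) {c : ℝ} {M : ℝ≥0∞}
    (hfin : ∃ r > c, μ {x | E x < r} ≠ ∞) (h : ∀ᶠ r in 𝓝[>] c, M ≤ μ {x | E x < r}) :
    M ≤ μ {x | E x ≤ c} := by
  have hlim := tendsto_measure_biInter_gt (μ := μ) (s := fun r => {x | E x < r})
    (fun r _ => nullMeasurableSet_lt hE aemeasurable_const)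
    (fun _ _ _ hij _ hx => hx.trans_le hij) hfin
  have hInter : ⋂ r > c, {x | E x < r} = {x | E x ≤ c} := by
    ext x
    simp only [mem_iInter, mem_ofPred_eq]
    exact forall_gt_iff_le
  rw [hInter] at hlim
  exact ge_of_tendsto hlim h

lemma tendsto_measure_setOf_lt_atBot (hE : AEMeasurable E μ)
    (hfin : ∃ r, μ {x | E x < r} ≠ ∞) :
    Tendsto (fun r => μ {x | E x < r}) atBot (𝓝 0) := by
  have hlim := tendsto_measure_iInter_atBot (μ := μ) (s := fun r => {x | E x < r})
    (fun r => nullMeasurableSet_lt hE aemeasurable_const)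
    (fun _ _ hij _ hx => hx.trans_le hij) hfin
  have hInter : ⋂ r : ℝ, {x | E x < r} = ∅ :=
    eq_empty_of_forall_notMem fun x hx => lt_irrefl (E x) (mem_iInter.1 hx (E x))
  rwa [hInter, measure_empty] at hlim

lemma measure_setOf_le_eq_of_level_null {c : ℝ} (hc : μ {x | E x = c} = 0) :
    μ {x | E x ≤ c} = μ {x | E x < c} := by
  refine le_antisymm ?_ (measure_mono fun x (hx : E x < c) => hx.le)
  calc μ {x | E x ≤ c} ≤ μ ({x | E x < c} ∪ {x | E x = c}) :=
        measure_mono fun x (hx : E x ≤ c) => hx.lt_or_eq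
    _ ≤ μ {x | E x < c} + μ {x | E x = c} := measure_union_le _ _
    _ = μ {x | E x < c} := by rw [hc, add_zero]

theorem measure_setOf_neg_and_measure_lt (hE : AEMeasurable E μ)
    (hlevel : ∀ c, μ {x | E x = c} = 0) (hfin : ∀ c < 0, μ {x | E x < c} ≠ ∞)
    (hinf : μ {x | E x < 0} = ∞) (M : ℝ≥0∞) :
    μ {x | E x < 0 ∧ μ {y | E y < E x} < M} = M := by
  rcases eq_or_ne M ∞ with rfl | hM
  · convert hinf using 2
    exact ext fun x => and_iff_left_of_imp fun hx => (hfin _ hx).lt_top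
  set S := {c : ℝ | c < 0 ∧ μ {x | E x < c} < M}
  have hS_bdd : BddAbove S := ⟨0, fun c hc => hc.1.le⟩
  rcases eq_or_ne M 0 with rfl | hM0
  · simp
  obtain ⟨c₀, hc₀⟩ : S.Nonempty :=
    (((tendsto_measure_setOf_lt_atBot hE ⟨-1, hfin _ (by norm_num)⟩).eventually
      (gt_mem_nhds (pos_iff_ne_zero.2 hM0))).and (eventually_lt_atBot 0)).exists.imp
      fun _ h => ⟨h.2, h.1⟩
  -- `F(c) = μ {E < c}` is continuous, so it equals `M` at `c = sup {c < 0 | F c < M}`.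
  set c := sSup S
  have hle : μ {x | E x < c} ≤ M := measure_setOf_lt_le_of_forall_lt fun r hr => by
    obtain ⟨c', hc', hrc'⟩ := exists_lt_of_lt_csSup ⟨c₀, hc₀⟩ hr
    exact (measure_mono fun x hx => lt_trans hx hrc').trans hc'.2.le
  have hc_neg : c < 0 := by
    have hc_le : c ≤ 0 := csSup_le ⟨c₀, hc₀⟩ fun c hc => hc.1.le
    refine hc_le.lt_of_ne fun h0 => hM ?_
    rw [h0, hinf] at hle
    exact top_le_iff.1 hle
  have hge : M ≤ μ {x | E x ≤ c} := by
    refine le_measure_setOf_le_of_eventually hE ⟨c / 2, by linarith, hfin _ (by linarith)⟩ ?_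
    filter_upwards [Ioo_mem_nhdsGT hc_neg] with r hr
    exact not_lt.1 fun h => (le_csSup hS_bdd ⟨hr.2, h⟩).not_gt hr.1
  have hlevel_c := measure_setOf_le_eq_of_level_null (hlevel c)
  have hc_eq : μ {x | E x < c} = M := le_antisymm hle (hlevel_c ▸ hge)
  refine le_antisymm ?_ ?_
  · calc _ ≤ μ {x | E x ≤ c} := measure_mono fun x hx => le_csSup hS_bdd hx
      _ = M := hlevel_c.trans hc_eq
  · refine hc_eq.symm.le.trans (measure_mono fun x hx => ?_)
    obtain ⟨c', hc', hxc'⟩ := exists_lt_of_lt_csSup ⟨c₀, hc₀⟩ hx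
    exact ⟨hxc'.trans hc'.1, (measure_mono fun y hy => lt_trans hy hxc').trans_lt hc'.2⟩

end LevelSets

section Equimeasurable

variable {α : Type*} [MeasurableSpace α] {μ : Measure α} {g h : α → ℝ}

lemma map_restrict_Ioi_eq_of_measure_gt_eq (hg : AEMeasurable g μ) (hh : AEMeasurable h μ)
    (hfin : ∀ s > 0, μ {x | s < g x} ≠ ∞)
    (heq : ∀ s > 0, μ {x | s < g x} = μ {x | s < h x}) :
    (μ.map g).restrict (Ioi 0) = (μ.map h).restrict (Ioi 0) := by
  have hmap_Ioi : ∀ {k : α → ℝ}, AEMeasurable k μ → ∀ s, μ.map k (Ioi s) = μ {x | s < k x} :=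
    fun hk s => Measure.map_apply_of_aemeasurable hk measurableSet_Ioi
  have hIoi : ⋃ n : ℕ, Ioi (1 / ((n : ℝ) + 1)) = Ioi 0 :=
    (isGLB_of_tendsto_atTop (fun m n hmn => Nat.one_div_le_one_div hmn)
      tendsto_one_div_add_atTop_nhds_zero_nat).iUnion_Ioi_eq
  rw [← hIoi, Measure.restrict_iUnion_congr]
  intro n
  have hε : (0 : ℝ) < 1 / ((n : ℝ) + 1) := Nat.one_div_pos_of_nat
  have : IsFiniteMeasure ((μ.map g).restrict (Ioi (1 / ((n : ℝ) + 1)))) :=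
    ⟨by rw [Measure.restrict_apply_univ, hmap_Ioi hg]; exact (hfin _ hε).lt_top⟩
  refine ext_of_generate_finite _ (borel_eq_generateFrom_Ioi ℝ) isPiSystem_Ioi ?_ ?_
  · rintro _ ⟨s, rfl⟩
    rw [Measure.restrict_apply measurableSet_Ioi, Measure.restrict_apply measurableSet_Ioi,
      Ioi_inter_Ioi, hmap_Ioi hg, hmap_Ioi hh]
    exact heq _ (hε.trans_le (le_max_right _ _))
  · rw [Measure.restrict_apply_univ, Measure.restrict_apply_univ, hmap_Ioi hg, hmap_Ioi hh]
    exact heq _ hε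

lemma integral_comp_eq_of_measure_gt_eq {G : Type*} [NormedAddCommGroup G] [NormedSpace ℝ G]
    (hg : AEMeasurable g μ) (hh : AEMeasurable h μ)
    (hfin : ∀ s > 0, μ {x | s < g x} ≠ ∞)
    (heq : ∀ s > 0, μ {x | s < g x} = μ {x | s < h x})
    {u : ℝ → G} (hu : StronglyMeasurable u) (hu0 : ∀ r ≤ 0, u r = 0) :
    ∫ x, u (g x) ∂μ = ∫ x, u (h x) ∂μ := by
  have hmap : ∀ {k : α → ℝ}, AEMeasurable k μ → ∫ x, u (k x) ∂μ = ∫ r in Ioi 0, u r ∂μ.map k :=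
    fun hk => by
      rw [← integral_map hk hu.aestronglyMeasurable]
      exact (setIntegral_eq_integral_of_forall_compl_eq_zero (s := Ioi 0)
        fun r hr => hu0 r (not_lt.1 hr)).symm
  rw [hmap hg, hmap hh, map_restrict_Ioi_eq_of_measure_gt_eq hg hh hfin heq]

end Equimeasurable

section Schwarz

variable {f : Ph → ℝ}

lemma schwarz_nonneg (f : Ph → ℝ) (t : ℝ) : 0 ≤ schwarz f t :=
  Real.sInf_nonneg fun _ hs => hs.1

lemma schwarz_le {s t : ℝ} (hs : 0 ≤ s) (h : distFun f s ≤ ENNReal.ofReal t) :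
    schwarz f t ≤ s :=
  csInf_le ⟨0, fun _ hs => hs.1⟩ ⟨hs, h⟩

lemma distFun_ne_top_of_integrable (hf : Integrable f) {s : ℝ} (hs : 0 < s) :
    distFun f s ≠ ∞ :=
  ne_top_of_le_ne_top (hf.measure_norm_ge_lt_top hs).ne
    (measure_mono fun z (hz : s < f z) => hz.le.trans (le_abs_self _))

lemma lt_distFun_of_lt_schwarz {s t : ℝ} (hs : 0 ≤ s) (h : s < schwarz f t) :
    ENNReal.ofReal t < distFun f s :=
  not_le.1 fun h' => (schwarz_le hs h').not_gt h

lemma exists_distFun_le (hf : Measurable f) (hfin : ∀ s > 0, distFun f s ≠ ∞) {t : ℝ}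
    (ht : 0 < t) : ∃ s, 0 ≤ s ∧ distFun f s ≤ ENNReal.ofReal t := by
  have hlim : Tendsto (fun s => distFun f s) atTop (𝓝 0) := by
    have := (tendsto_measure_setOf_lt_atBot (μ := volume) (E := fun z => -f z)
      hf.neg.aemeasurable ⟨-1, by simpa only [neg_lt_neg_iff, distFun] using hfin 1 one_pos⟩).comp
      tendsto_neg_atTop_atBot
    simpa only [Function.comp_def, neg_lt_neg_iff, distFun] using this
  exact ((hlim.eventually (gt_mem_nhds (ENNReal.ofReal_pos.2 ht))).and
    (eventually_ge_atTop 0)).exists.imp fun _ h => ⟨h.2, h.1.le⟩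

lemma lt_schwarz_iff (hf : Measurable f) (hfin : ∀ s > 0, distFun f s ≠ ∞) {s t : ℝ}
    (hs : 0 ≤ s) (ht : 0 < t) : s < schwarz f t ↔ ENNReal.ofReal t < distFun f s := by
  refine ⟨lt_distFun_of_lt_schwarz hs, fun h => ?_⟩
  obtain ⟨r, hsr, hr⟩ : ∃ r > s, ENNReal.ofReal t < distFun f r := by
    by_contra! hcon
    exact h.not_ge (measure_setOf_gt_le_of_forall_gt hcon)
  refine hsr.trans_le (le_csInf (exists_distFun_le hf hfin ht) fun s' hs' => ?_)
  by_contra! hs'r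
  exact (hr.trans_le ((measure_mono fun z (hz : r < f z) => hs'r.trans hz).trans hs'.2)).false

lemma schwarz_antitoneOn (hf : Measurable f) (hfin : ∀ s > 0, distFun f s ≠ ∞) :
    AntitoneOn (schwarz f) (Ioi 0) := fun _ ht _ _ htt' =>
  csInf_le_csInf ⟨0, fun _ hs => hs.1⟩ (exists_distFun_le hf hfin ht)
    fun _ hs => ⟨hs.1, hs.2.trans (ENNReal.ofReal_le_ofReal htt')⟩

end Schwarz

section MicroscopicEnergy

lemma norm_le_vW (v : Sp) : ‖v‖ ≤ vW v :=
  Real.le_sqrt_of_sq_le (by linarith)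

lemma vW_sub_one_le (v : Sp) : vW v - 1 ≤ ‖v‖ ^ 2 / 2 := by
  have : vW v ≤ 1 + ‖v‖ ^ 2 / 2 :=
    Real.sqrt_le_iff.2 ⟨by positivity, by nlinarith [sq_nonneg (‖v‖ ^ 2)]⟩
  linarith

lemma measurable_microE {φ : Sp → ℝ} (hφ : Measurable φ) : Measurable (microE φ) :=
  ((continuous_vW.comp continuous_snd).measurable.sub_const 1).add (hφ.comp measurable_fst)

lemma volume_ball_Sp {r : ℝ} (hr : 0 ≤ r) :
    volume (Metric.ball (0 : Sp) r) = ENNReal.ofReal (r ^ 3) * volume (Metric.ball (0 : Sp) 1) := by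
  rw [Measure.addHaar_ball volume 0 hr, finrank_euclideanSpace_fin]

lemma volume_setOf_vW_eq (c : ℝ) : volume {v : Sp | vW v = c} = 0 := by
  refine measure_mono_null (fun v (hv : vW v = c) => ?_)
    (Measure.addHaar_sphere volume (0 : Sp) (Real.sqrt (c ^ 2 - 1)))
  rw [mem_sphere_zero_iff_norm, ← hv, vW, Real.sq_sqrt (by positivity), add_sub_cancel_left,
    Real.sqrt_sq (norm_nonneg v)]

lemma volume_setOf_microE_eq {φ : Sp → ℝ} (hφ : Measurable φ) (c : ℝ) :
    volume {z : Ph | microE φ z = c} = 0 := by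
  rw [Measure.volume_eq_prod, Measure.measure_prod_null
    (measurableSet_eq_fun (measurable_microE hφ) measurable_const)]
  refine Eventually.of_forall fun x => measure_mono_null (fun v (hv : microE φ (x, v) = c) => ?_)
    (volume_setOf_vW_eq (c + 1 - φ x))
  change vW v = c + 1 - φ x
  rw [← hv, microE]
  ring

lemma aJacE_mono (φ : Sp → ℝ) : Monotone (aJacE φ) :=
  fun _ _ hab => measure_mono fun _ hz => lt_of_lt_of_le hz hab

lemma one_add_pow_three_le {ε w q : ℝ} (hε : 0 < ε) (hw : ε ≤ w) (hq : 3 ≤ q) :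
    (1 + w) ^ 3 ≤ (1 + 1 / ε) ^ q * w ^ q := by
  have hKw : 1 + w ≤ (1 + 1 / ε) * w := by
    rw [add_mul, one_mul, one_div_mul_eq_div, add_comm]
    exact add_le_add_right ((one_le_div hε).2 hw) w
  calc (1 + w) ^ 3 ≤ ((1 + 1 / ε) * w) ^ (3 : ℝ) := by
        rw [show (3 : ℝ) = (3 : ℕ) by norm_num, Real.rpow_natCast]
        exact pow_le_pow_left₀ (by linarith) hKw 3
    _ ≤ ((1 + 1 / ε) * w) ^ q := Real.rpow_le_rpow_of_exponent_le (by linarith) hq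
    _ = (1 + 1 / ε) ^ q * w ^ q := Real.mul_rpow (by positivity) (by linarith)

lemma volume_slice_microE_lt_le {φ : Sp → ℝ} {e q : ℝ} (he : e < 0) (hq : 3 ≤ q) (x : Sp) :
    volume (Prod.mk x ⁻¹' {z : Ph | microE φ z < e})
      ≤ ENNReal.ofReal ((1 + 1 / -e) ^ q * ‖φ x‖ ^ q) * volume (Metric.ball (0 : Sp) 1) := by
  rcases le_or_gt e (φ x) with hφx | hφx
  · refine (measure_mono_null (fun v (hv : microE φ (x, v) < e) => ?_) measure_empty).trans_le
      zero_le
    linarith [one_le_vW v, show vW v - 1 + φ x < e from hv]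
  have hw : -φ x = ‖φ x‖ := by rw [Real.norm_of_nonpos (by linarith)]
  have hslice : Prod.mk x ⁻¹' {z : Ph | microE φ z < e} ⊆ Metric.ball 0 (1 + ‖φ x‖) :=
    fun v (hv : vW v - 1 + φ x < e) => mem_ball_zero_iff.2 (by linarith [norm_le_vW v])
  calc _ ≤ volume (Metric.ball (0 : Sp) (1 + ‖φ x‖)) := measure_mono hslice
    _ = ENNReal.ofReal ((1 + ‖φ x‖) ^ 3) * volume (Metric.ball (0 : Sp) 1) :=
        volume_ball_Sp (by positivity)
    _ ≤ _ := by
        gcongr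
        exact one_add_pow_three_le (by linarith) (by linarith) hq

lemma aJacE_ne_top_s9 {φ : Sp → ℝ} (hφ : Measurable φ) {q : ℝ} (hq : 3 ≤ q)
    (hφq : MemLp φ (ENNReal.ofReal q) volume) {e : ℝ} (he : e < 0) : aJacE φ e ≠ ∞ := by
  have hφq' : Integrable fun x => ‖φ x‖ ^ q := by
    simpa only [ENNReal.toReal_ofReal (by linarith : 0 ≤ q)] using
      hφq.integrable_norm_rpow (by simp; linarith) ENNReal.ofReal_ne_top
  rw [aJacE, Measure.volume_eq_prod,
    Measure.prod_apply (measurableSet_lt (measurable_microE hφ) measurable_const)]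
  refine ne_top_of_le_ne_top ?_ (lintegral_mono (volume_slice_microE_lt_le he hq))
  have hK : 0 ≤ (1 + 1 / -e) ^ q := Real.rpow_nonneg (by linarith [one_div_pos.2 (neg_pos.2 he)]) q
  simp_rw [ENNReal.ofReal_mul hK]
  rw [lintegral_mul_const' _ _ measure_ball_lt_top.ne,
    lintegral_const_mul' _ _ ENNReal.ofReal_ne_top]
  exact ENNReal.mul_ne_top (ENNReal.mul_ne_top ENNReal.ofReal_ne_top hφq'.lintegral_lt_top.ne)
    measure_ball_lt_top.ne

lemma ball_prod_ball_subset_microE_neg {φ : Sp → ℝ} {m t : ℝ} (hm : 0 < m)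
    (hlow : ∀ x, m / (1 + ‖x‖) ≤ -φ x) (ht : 1 ≤ t) :
    Metric.ball (0 : Sp) (t ^ 2) ×ˢ Metric.ball (0 : Sp) (√m / t) ⊆ {z : Ph | microE φ z < 0} := by
  rintro ⟨x, v⟩ ⟨hx, hv⟩
  rw [mem_ball_zero_iff] at hx hv
  have hv2 : ‖v‖ ^ 2 / 2 < m / t ^ 2 / 2 := by
    rw [← Real.sq_sqrt hm.le, ← div_pow]
    gcongr
  have ht2 : m / t ^ 2 / 2 ≤ m / (1 + t ^ 2) := by
    rw [div_div]
    gcongr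
    nlinarith
  have hx2 : m / (1 + t ^ 2) < m / (1 + ‖x‖) := by gcongr
  show vW v - 1 + φ x < 0
  linarith [vW_sub_one_le v, hlow x]

lemma aJacE_zero_eq_top_s9 {φ : Sp → ℝ} (hφ0 : ∀ x, φ x ≤ 0) (hm : 0 < mPhi φ) :
    aJacE φ 0 = ∞ := by
  set m := mPhi φ
  have hlow : ∀ x, m / (1 + ‖x‖) ≤ -φ x := fun x => by
    rw [div_le_iff₀ (by positivity), ← abs_of_nonpos (hφ0 x), mul_comm]
    exact ciInf_le ⟨0, by rintro _ ⟨y, rfl⟩; positivity⟩ x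
  set B := volume (Metric.ball (0 : Sp) 1)
  have hB : B ≠ 0 := (Metric.measure_ball_pos volume 0 one_pos).ne'
  have hbox : ∀ t ≥ (1 : ℝ), ENNReal.ofReal (t ^ 3 * √m ^ 3) * (B * B) ≤ aJacE φ 0 := by
    intro t ht
    calc _ = volume (Metric.ball (0 : Sp) (t ^ 2) ×ˢ Metric.ball (0 : Sp) (√m / t)) := by
          rw [Measure.volume_eq_prod, Measure.prod_prod,
            volume_ball_Sp (r := t ^ 2) (by positivity),
            volume_ball_Sp (r := √m / t) (by positivity), mul_mul_mul_comm,
            ← ENNReal.ofReal_mul (by positivity)]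
          congr 2
          field_simp
      _ ≤ aJacE φ 0 := measure_mono (ball_prod_ball_subset_microE_neg hm hlow ht)
  have hlim : Tendsto (fun t : ℝ => ENNReal.ofReal (t ^ 3 * √m ^ 3) * (B * B)) atTop (𝓝 ∞) := by
    rw [← ENNReal.top_mul (mul_ne_zero hB hB)]
    exact ENNReal.Tendsto.mul_const (ENNReal.tendsto_ofReal_atTop.comp
      ((tendsto_pow_atTop three_ne_zero).atTop_mul_const (by positivity)))
      (Or.inl ENNReal.top_ne_zero)
  exact top_unique (le_of_tendsto hlim ((eventually_ge_atTop 1).mono hbox))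

end MicroscopicEnergy

section Rearrangement

variable {f : Ph → ℝ} {φ : Sp → ℝ}

lemma rearr_nonneg (f : Ph → ℝ) (φ : Sp → ℝ) (z : Ph) : 0 ≤ rearr f φ z := by
  unfold rearr
  split_ifs
  exacts [schwarz_nonneg f _, le_rfl]

lemma ofReal_aJac (hJ : ∀ e < 0, aJacE φ e ≠ ∞) {e : ℝ} (he : e < 0) :
    ENNReal.ofReal (aJac φ e) = aJacE φ e :=
  ENNReal.ofReal_toReal (hJ e he)

lemma aJac_mono (hJ : ∀ e < 0, aJacE φ e ≠ ∞) {e e' : ℝ} (hee' : e ≤ e') (he' : e' < 0) :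
    aJac φ e ≤ aJac φ e' :=
  ENNReal.toReal_mono (hJ _ he') (aJacE_mono φ hee')

/-- The superlevel sets of the profile `e ↦ f*(a_φ(e)) 1_{e<0}` are intervals: it is antitone
where `a_φ > 0`, constant where `a_φ = 0` and zero for `e ≥ 0`. -/
lemma measurable_rearr (hf : Measurable f) (hfin : ∀ s > 0, distFun f s ≠ ∞)
    (hφ : Measurable φ) (hJ : ∀ e < 0, aJacE φ e ≠ ∞) : Measurable (rearr f φ) := by
  have hH : Measurable fun e : ℝ => if e < 0 then schwarz f (aJac φ e) else 0 := by
    refine measurable_of_Ioi fun s => OrdConnected.measurableSet ⟨fun e₁ he₁ e₂ he₂ e he => ?_⟩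
    simp only [mem_preimage, mem_Ioi] at he₁ he₂ ⊢
    by_cases he0 : e < 0
    swap
    · rw [if_neg he0]
      rwa [if_neg fun h => he0 (he.2.trans_lt h)] at he₂
    rw [if_pos (he.1.trans_lt he0)] at he₁
    rw [if_pos he0]
    rcases (show 0 ≤ aJac φ e from ENNReal.toReal_nonneg).eq_or_lt with h0 | hpos
    · have h₁0 : aJac φ e₁ = 0 :=
        le_antisymm ((aJac_mono hJ he.1 he0).trans h0.symm.le) ENNReal.toReal_nonneg
      rwa [← h0, ← h₁0]
    · split_ifs at he₂ with he₂0
      · exact he₂.trans_le (schwarz_antitoneOn hf hfin hpos (hpos.trans_le (aJac_mono hJ he.2 he₂0))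
          (aJac_mono hJ he.2 he₂0))
      · exact he₂.trans_le (schwarz_nonneg f _)
  exact hH.comp (measurable_microE hφ)

lemma distFun_rearr (hf : Measurable f) (hfin : ∀ s > 0, distFun f s ≠ ∞)
    (hφ : Measurable φ) (hJ : ∀ e < 0, aJacE φ e ≠ ∞) (hJ0 : aJacE φ 0 = ∞) {s : ℝ}
    (hs : 0 ≤ s) : distFun (rearr f φ) s = distFun f s := by
  have key := measure_setOf_neg_and_measure_lt (measurable_microE hφ).aemeasurable
    (volume_setOf_microE_eq hφ) hJ hJ0
  have hnull : volume {z | microE φ z < 0 ∧ aJacE φ (microE φ z) = 0} = 0 :=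
    le_antisymm (ENNReal.le_of_forall_pos_le_add fun ε hε _ => by
      rw [zero_add, ← key ε]
      exact measure_mono fun z hz => ⟨hz.1, hz.2.trans_lt (ENNReal.coe_pos.2 hε)⟩) zero_le
  have hsub : {z | s < rearr f φ z}
      ⊆ {z | microE φ z < 0 ∧ aJacE φ (microE φ z) < distFun f s} := fun z hz => by
    rw [mem_ofPred_eq, rearr] at hz
    split_ifs at hz with he
    · exact ⟨he, ofReal_aJac hJ he ▸ lt_distFun_of_lt_schwarz hs hz⟩
    · exact absurd hz hs.not_gt
  have hsup : {z | microE φ z < 0 ∧ aJacE φ (microE φ z) < distFun f s}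
      ⊆ {z | s < rearr f φ z} ∪ {z | microE φ z < 0 ∧ aJacE φ (microE φ z) = 0} := by
    rintro z ⟨he, hlt⟩
    by_cases h0 : aJacE φ (microE φ z) = 0
    · exact Or.inr ⟨he, h0⟩
    · refine Or.inl ?_
      change s < rearr f φ z
      rw [rearr, if_pos he,
        lt_schwarz_iff hf hfin hs (t := aJac φ _) (ENNReal.toReal_pos h0 (hJ _ he)),
        ofReal_aJac hJ he]
      exact hlt
  refine le_antisymm ((measure_mono hsub).trans (key _).le) ?_
  calc distFun f s = _ := (key _).symm
    _ ≤ _ := (measure_mono hsup).trans (measure_union_le _ _)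
    _ = distFun (rearr f φ) s := by rw [hnull, add_zero]; rfl

end Rearrangement

section AeCongr

variable {φ ψ : Sp → ℝ}

lemma microE_ae_eq (h : φ =ᵐ[volume] ψ) : microE φ =ᵐ[volume] microE ψ := by
  have hfst : (fun z : Ph => φ z.1) =ᵐ[volume] fun z => ψ z.1 := by
    rw [Measure.volume_eq_prod]
    exact Measure.quasiMeasurePreserving_fst.ae_eq_comp h
  filter_upwards [hfst] with z hz
  simp only [microE, hz]

lemma aJacE_congr_ae (h : φ =ᵐ[volume] ψ) : aJacE φ = aJacE ψ :=
  funext fun e => measure_congr ((microE_ae_eq h).fun_comp (· < e))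

lemma rearr_congr_ae (f : Ph → ℝ) (h : φ =ᵐ[volume] ψ) : rearr f φ =ᵐ[volume] rearr f ψ := by
  filter_upwards [microE_ae_eq h] with z hz
  simp only [rearr, aJac, hz, aJacE_congr_ae h]

lemma distFun_congr_ae {g g' : Ph → ℝ} (h : g =ᵐ[volume] g') (s : ℝ) :
    distFun g s = distFun g' s :=
  measure_congr (h.fun_comp (s < ·))

end AeCongr

theorem stmt9_general (p : ℝ) (f : Ph → ℝ) (hf : IsEp p f)
    (q : ℝ) (hq : 3 < q) (φ : Sp → ℝ) (hφ : IsPhiq q φ) :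
    (∀ s : ℝ, 0 ≤ s → distFun (rearr f φ) s = distFun f s) ∧
    ∀ β : ℝ → ℝ, ContDiffOn ℝ 1 β (Ici 0) → (∀ t, 0 ≤ t → 0 ≤ β t) → β 0 = 0 →
      ∫ z : Ph, β (rearr f φ z) = ∫ z : Ph, β (f z) := by
  have hfin : ∀ s > 0, distFun f s ≠ ∞ := fun s hs => distFun_ne_top_of_integrable hf.l1 hs
  have hφm := hφ.lq.aestronglyMeasurable.aemeasurable
  set ψ := hφm.mk φ
  have hφψ : φ =ᵐ[volume] ψ := hφm.ae_eq_mk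
  have hJ : ∀ e < 0, aJacE ψ e ≠ ∞ := fun e he =>
    aJacE_ne_top_s9 hφm.measurable_mk hq.le (hφ.lq.ae_eq hφψ) he
  have hJ0 : aJacE ψ 0 = ∞ := aJacE_congr_ae hφψ ▸ aJacE_zero_eq_top_s9 hφ.nonpos hφ.m_pos
  have hdist : ∀ s : ℝ, 0 ≤ s → distFun (rearr f φ) s = distFun f s := fun s hs =>
    (distFun_congr_ae (rearr_congr_ae f hφψ) s).trans
      (distFun_rearr hf.meas hfin hφm.measurable_mk hJ hJ0 hs)
  refine ⟨hdist, fun β hβ _ hβ0 => ?_⟩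
  have hu : Continuous fun r => β (max r 0) := hβ.continuousOn.comp_continuous
    (continuous_id.max continuous_const) fun r => le_max_right r 0
  calc ∫ z, β (rearr f φ z) = ∫ z, β (max (rearr f φ z) 0) := by
        simp_rw [max_eq_left (rearr_nonneg f φ _)]
    _ = ∫ z, β (max (f z) 0) :=
        integral_comp_eq_of_measure_gt_eq
          ((measurable_rearr hf.meas hfin hφm.measurable_mk hJ).aemeasurable.congr
            (rearr_congr_ae f hφψ).symm)
          hf.meas.aemeasurable (fun s hs => (hdist s hs.le).trans_ne (hfin s hs))
          (fun s hs => hdist s hs.le)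
          hu.stronglyMeasurable fun r hr => by rw [max_eq_right hr, hβ0]
    _ = ∫ z, β (f z) := by simp_rw [max_eq_left (hf.nonneg _)]

/-- equimeasurability of the rearrangement with respect to the microscopic
energy. -/
theorem stmt9 (p : ℝ) (hp : 3 / 2 < p) (f : Ph → ℝ) (hf : IsEp p f) (hne : f ≠ 0)
    (q : ℝ) (hq : 3 < q) (φ : Sp → ℝ) (hφ : IsPhiq q φ) :
    (∀ s : ℝ, 0 ≤ s → distFun (rearr f φ) s = distFun f s) ∧
    ∀ β : ℝ → ℝ, ContDiffOn ℝ 1 β (Ici 0) → (∀ t, 0 ≤ t → 0 ≤ β t) → β 0 = 0 →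
      ∫ z : Ph, β (rearr f φ z) = ∫ z : Ph, β (f z) :=
  stmt9_general p f hf q hq φ hφ
end
end
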